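/- Let σ_P², σ_Q² > 1 with σ_P² ≠ σ_Q² possible, set ξ := (σ_P² − 1)/(σ_Q² − 1) and μ_j := √(1 + j(σ_Q² − 1)), and for integers j > ξ define probability measures P_j, Q_j on the four points {±1, ±μ_j} by P_j(±1) = 1/2 − ξ/(2j), P_j(±μ_j) = ξ/(2j), Q_j(±1) = 1/2 − 1/(2j), Q_j(±μ_j) = 1/(2j). Then P_j has mean 0 and variance σ_P², Q_j has mean 0 and variance σ_Q², and H²(P_j, Q_j) = h²(ξ/j, 1/j), which tends to 0 as j → ∞. -/

import Mathlib

open MeasureTheory Real Filter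

/-- The squared Hellinger distance `H²(P,Q) = (1/2)∫(√p − √q)² dμ`, computed with
respect to the dominating measure `μ = P + Q`. -/
noncomputable def hellingerSq (P Q : Measure ℝ) : ℝ :=
  (1 / 2) * ∫ x, (Real.sqrt ((P.rnDeriv (P + Q)) x).toReal
      - Real.sqrt ((Q.rnDeriv (P + Q)) x).toReal) ^ 2 ∂(P + Q)

/-- The binary squared Hellinger distance
`h²(r,s) = (1/2)((√r − √s)² + (√(1−r) − √(1−s))²)`. -/
noncomputable def binaryH (r s : ℝ) : ℝ :=
  (1 / 2) * ((Real.sqrt r - Real.sqrt s) ^ 2 +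
    (Real.sqrt (1 - r) - Real.sqrt (1 - s)) ^ 2)

/-- The quaternary probability measure on `{1, −1, μ, −μ}` with mass `w` at each of
`±1` and mass `w'` at each of `±μ`. -/
noncomputable def quaternary (μ w w' : ℝ) : Measure ℝ :=
  ENNReal.ofReal w • Measure.dirac 1 + ENNReal.ofReal w • Measure.dirac (-1) +
  ENNReal.ofReal w' • Measure.dirac μ + ENNReal.ofReal w' • Measure.dirac (-μ)

/-!
Both measures are symmetric, so their means vanish, and `μ_j² = 1 + j(σ_Q² − 1)` is chosen so that
the second moment `(1 − p) + p μ_j²` of the mass profile `((1 − p)/2, p/2)` on `(±1, ±μ_j)` equals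
`1 + jp(σ_Q² − 1)`. Two such measures have densities with respect to their sum that are constant on
`{±1}` and on `{±μ_j}`, so their Hellinger distance collapses to the binary one between the masses
`p, q` of `{±μ_j}`; with `p, q = O(1/j)` it tends to `0` by continuity of `h²`.
-/

open scoped ENNReal

theorem ENNReal.ofReal_mul_ofReal_div_of_le {a b : ℝ} (hab : a ≤ b) :
    ENNReal.ofReal b * ENNReal.ofReal (a / b) = ENNReal.ofReal a := by
  rcases le_or_gt b 0 with hb | hb
  · simp [ENNReal.ofReal_of_nonpos hb, ENNReal.ofReal_of_nonpos (hab.trans hb)]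
  · rw [← ENNReal.ofReal_mul hb.le, mul_div_cancel₀ a hb.ne']

theorem mul_sqrt_div_sub_sqrt_div_sq {a b : ℝ} (ha : 0 ≤ a) (hb : 0 ≤ b) :
    (a + b) * (√(a / (a + b)) - √(b / (a + b))) ^ 2 = (√a - √b) ^ 2 := by
  rcases (add_nonneg ha hb).eq_or_lt with hab | hab
  · obtain ⟨rfl, rfl⟩ := (add_eq_zero_iff_of_nonneg ha hb).1 hab.symm
    simp
  · rw [Real.sqrt_div ha, Real.sqrt_div hb, div_sub_div_same, div_pow, Real.sq_sqrt hab.le,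
      mul_div_cancel₀ _ hab.ne']

theorem neg_notMem_one_neg_one {μ : ℝ} (hμ : μ ∉ ({1, -1} : Set ℝ)) :
    -μ ∉ ({1, -1} : Set ℝ) := by
  simp only [Set.mem_insert_iff, Set.mem_singleton_iff, not_or] at hμ ⊢
  exact ⟨fun h => hμ.2 (by linarith), fun h => hμ.1 (by linarith)⟩

namespace quaternary

variable {μ w w' : ℝ}

instance (μ w w' : ℝ) : IsFiniteMeasure (quaternary μ w w') :=
  ⟨by simp [quaternary]⟩

theorem integral_eq (hw : 0 ≤ w) (hw' : 0 ≤ w') (f : ℝ → ℝ) :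
    ∫ x, f x ∂quaternary μ w w' = w * f 1 + w * f (-1) + w' * f μ + w' * f (-μ) := by
  have hint : ∀ c a : ℝ, Integrable f (ENNReal.ofReal c • Measure.dirac a) :=
    fun c a => (integrable_dirac (by simp)).smul_measure ENNReal.ofReal_ne_top
  rw [quaternary, integral_add_measure (((hint _ _).add_measure (hint _ _)).add_measure
      (hint _ _)) (hint _ _), integral_add_measure ((hint _ _).add_measure (hint _ _)) (hint _ _),
    integral_add_measure (hint _ _) (hint _ _)]
  simp only [integral_smul_measure, integral_dirac, ENNReal.toReal_ofReal hw,
    ENNReal.toReal_ofReal hw', smul_eq_mul]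

theorem integral_id (hw : 0 ≤ w) (hw' : 0 ≤ w') : ∫ x, x ∂quaternary μ w w' = 0 := by
  rw [integral_eq hw hw']
  ring

theorem integral_sq (hw : 0 ≤ w) (hw' : 0 ≤ w') :
    ∫ x, x ^ 2 ∂quaternary μ w w' = 2 * w + 2 * w' * μ ^ 2 := by
  rw [integral_eq hw hw']
  ring

theorem add {wP w'P wQ w'Q : ℝ} (hwP : 0 ≤ wP) (hw'P : 0 ≤ w'P) (hwQ : 0 ≤ wQ)
    (hw'Q : 0 ≤ w'Q) :
    quaternary μ wP w'P + quaternary μ wQ w'Q = quaternary μ (wP + wQ) (w'P + w'Q) := by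
  simp only [quaternary, ENNReal.ofReal_add hwP hwQ, ENNReal.ofReal_add hw'P hw'Q, add_smul]
  abel

theorem withDensity_eq (f : ℝ → ℝ≥0∞) :
    (quaternary μ w w').withDensity f =
      (ENNReal.ofReal w * f 1) • Measure.dirac 1 +
      (ENNReal.ofReal w * f (-1)) • Measure.dirac (-1) +
      (ENNReal.ofReal w' * f μ) • Measure.dirac μ +
      (ENNReal.ofReal w' * f (-μ)) • Measure.dirac (-μ) := by
  simp only [quaternary, withDensity_add_measure, withDensity_smul_measure,
    dirac_withDensity, smul_smul]

-- A density is only determined on the support `{±1, ±μ}`, so no third branch is needed.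
theorem rnDeriv_ae_eq {W W' : ℝ} (hμ : μ ∉ ({1, -1} : Set ℝ)) (hw : w ≤ W) (hw' : w' ≤ W') :
    (quaternary μ w w').rnDeriv (quaternary μ W W') =ᵐ[quaternary μ W W']
      fun x => if x ∈ ({1, -1} : Set ℝ) then ENNReal.ofReal (w / W)
        else ENNReal.ofReal (w' / W') := by
  have hμ' := neg_notMem_one_neg_one hμ
  refine (Measure.eq_rnDeriv (Measurable.ite (p := (· ∈ ({1, -1} : Set ℝ)))
    ((measurableSet_singleton _).insert 1) measurable_const measurable_const)
    Measure.MutuallySingular.zero_left ?_).symm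
  rw [zero_add, withDensity_eq, if_pos (by simp), if_pos (by simp), if_neg hμ, if_neg hμ',
    ENNReal.ofReal_mul_ofReal_div_of_le hw, ENNReal.ofReal_mul_ofReal_div_of_le hw']
  rfl

theorem hellingerSq_eq {wP w'P wQ w'Q : ℝ} (hμ : μ ∉ ({1, -1} : Set ℝ)) (hwP : 0 ≤ wP)
    (hw'P : 0 ≤ w'P) (hwQ : 0 ≤ wQ) (hw'Q : 0 ≤ w'Q) :
    hellingerSq (quaternary μ wP w'P) (quaternary μ wQ w'Q) =
      (√wP - √wQ) ^ 2 + (√w'P - √w'Q) ^ 2 := by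
  have hP := rnDeriv_ae_eq (w := wP) (w' := w'P) hμ (le_add_of_nonneg_right hwQ)
    (le_add_of_nonneg_right hw'Q)
  have hQ := rnDeriv_ae_eq (w := wQ) (w' := w'Q) hμ (le_add_of_nonneg_left hwP)
    (le_add_of_nonneg_left hw'P)
  have hμ' := neg_notMem_one_neg_one hμ
  rw [hellingerSq, add hwP hw'P hwQ hw'Q, integral_congr_ae (by filter_upwards [hP, hQ] with x hPx hQx; rw [hPx, hQx]),
    integral_eq (add_nonneg hwP hwQ) (add_nonneg hw'P hw'Q)]
  simp only [if_pos (show (1 : ℝ) ∈ ({1, -1} : Set ℝ) by simp),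
    if_pos (show (-1 : ℝ) ∈ ({1, -1} : Set ℝ) by simp), if_neg hμ, if_neg hμ',
    ENNReal.toReal_ofReal (div_nonneg hwP (add_nonneg hwP hwQ)),
    ENNReal.toReal_ofReal (div_nonneg hwQ (add_nonneg hwP hwQ)),
    ENNReal.toReal_ofReal (div_nonneg hw'P (add_nonneg hw'P hw'Q)),
    ENNReal.toReal_ofReal (div_nonneg hw'Q (add_nonneg hw'P hw'Q))]
  linear_combination mul_sqrt_div_sub_sqrt_div_sq hwP hwQ + mul_sqrt_div_sub_sqrt_div_sq hw'P hw'Q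

end quaternary

theorem integral_id_quaternary_half {μ p : ℝ} (hp : p ∈ Set.Icc (0 : ℝ) 1) :
    ∫ x, x ∂quaternary μ ((1 - p) / 2) (p / 2) = 0 :=
  quaternary.integral_id (by linarith [hp.2]) (by linarith [hp.1])

theorem integral_sq_quaternary_half {μ p : ℝ} (hp : p ∈ Set.Icc (0 : ℝ) 1) :
    ∫ x, x ^ 2 ∂quaternary μ ((1 - p) / 2) (p / 2) = 1 + p * (μ ^ 2 - 1) := by
  rw [quaternary.integral_sq (by linarith [hp.2]) (by linarith [hp.1])]
  ring

theorem hellingerSq_quaternary_eq_binaryH {μ r s : ℝ} (hμ : μ ∉ ({1, -1} : Set ℝ))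
    (hr : r ∈ Set.Icc (0 : ℝ) 1) (hs : s ∈ Set.Icc (0 : ℝ) 1) :
    hellingerSq (quaternary μ ((1 - r) / 2) (r / 2)) (quaternary μ ((1 - s) / 2) (s / 2)) =
      binaryH r s := by
  rw [quaternary.hellingerSq_eq hμ (by linarith [hr.2]) (by linarith [hr.1])
    (by linarith [hs.2]) (by linarith [hs.1])]
  simp only [Real.sqrt_div' _ zero_le_two, div_sub_div_same, div_pow,
    Real.sq_sqrt zero_le_two, binaryH]
  ring

theorem continuous_binaryH : Continuous fun p : ℝ × ℝ => binaryH p.1 p.2 := by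
  unfold binaryH
  fun_prop

theorem tendsto_binaryH_div_natCast (a b : ℝ) :
    Tendsto (fun n : ℕ => binaryH (a / n) (b / n)) atTop (nhds 0) := by
  have h0 : binaryH 0 0 = 0 := by simp [binaryH]
  have ha := tendsto_const_nhds (x := a).div_atTop tendsto_natCast_atTop_atTop
  have hb := tendsto_const_nhds (x := b).div_atTop tendsto_natCast_atTop_atTop
  simpa [h0, Function.comp_def] using (continuous_binaryH.tendsto (0, 0)).comp (ha.prodMk_nhds hb)

/-- Here `sP` and `sQ` denote the variances `σ_P²` and `σ_Q²`, both `> 1`,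
`ξ = (σ_P² − 1)/(σ_Q² − 1)` and `μ_j = √(1 + j(σ_Q² − 1))`. -/
theorem quaternary_sequence_hellinger_tendsto_zero
    (sP sQ : ℝ) (hsP : 1 < sP) (hsQ : 1 < sQ)
    (ξ : ℝ) (hξ : ξ = (sP - 1) / (sQ - 1)) :
    (∀ j : ℕ, ξ < j →
      (∫ x, x ∂(quaternary (Real.sqrt (1 + j * (sQ - 1)))
          (1 / 2 - ξ / (2 * j)) (ξ / (2 * j))) = 0) ∧
      (∫ x, x ^ 2 ∂(quaternary (Real.sqrt (1 + j * (sQ - 1)))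
          (1 / 2 - ξ / (2 * j)) (ξ / (2 * j)))) -
        (∫ x, x ∂(quaternary (Real.sqrt (1 + j * (sQ - 1)))
          (1 / 2 - ξ / (2 * j)) (ξ / (2 * j)))) ^ 2 = sP ∧
      (∫ x, x ∂(quaternary (Real.sqrt (1 + j * (sQ - 1)))
          (1 / 2 - 1 / (2 * j)) (1 / (2 * j))) = 0) ∧
      (∫ x, x ^ 2 ∂(quaternary (Real.sqrt (1 + j * (sQ - 1)))
          (1 / 2 - 1 / (2 * j)) (1 / (2 * j)))) -
        (∫ x, x ∂(quaternary (Real.sqrt (1 + j * (sQ - 1)))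
          (1 / 2 - 1 / (2 * j)) (1 / (2 * j)))) ^ 2 = sQ ∧
      hellingerSq
        (quaternary (Real.sqrt (1 + j * (sQ - 1))) (1 / 2 - ξ / (2 * j)) (ξ / (2 * j)))
        (quaternary (Real.sqrt (1 + j * (sQ - 1))) (1 / 2 - 1 / (2 * j)) (1 / (2 * j))) =
        binaryH (ξ / j) (1 / j)) ∧
    Tendsto (fun j : ℕ => binaryH (ξ / j) (1 / j)) atTop (nhds 0) := by
  have hξ0 : 0 < ξ := hξ ▸ div_pos (by linarith) (by linarith)
  refine ⟨fun j hj => ?_, tendsto_binaryH_div_natCast ξ 1⟩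
  have hj0 : (0 : ℝ) < j := hξ0.trans hj
  have hj1 : (1 : ℝ) ≤ j := Nat.one_le_cast.2 (Nat.cast_pos.1 hj0)
  have hprob : ∀ t : ℝ, 0 ≤ t → t ≤ j → t / j ∈ Set.Icc (0 : ℝ) 1 := fun t ht htj =>
    ⟨div_nonneg ht hj0.le, (div_le_one hj0).2 htj⟩
  have hweights : ∀ t : ℝ, 1 / 2 - t / (2 * j) = (1 - t / j) / 2 ∧ t / (2 * j) = t / j / 2 :=
    fun t => ⟨by ring, by ring⟩
  set μ := √(1 + j * (sQ - 1))
  have hμsq : μ ^ 2 = 1 + j * (sQ - 1) := Real.sq_sqrt (by nlinarith)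
  have hμ : μ ∉ ({1, -1} : Set ℝ) := by
    have : 1 < μ := by nlinarith [Real.sqrt_nonneg (1 + j * (sQ - 1))]
    simp only [Set.mem_insert_iff, Set.mem_singleton_iff, not_or]
    constructor <;> linarith
  have hP := hprob ξ hξ0.le hj.le
  have hQ := hprob 1 zero_le_one hj1
  rw [(hweights ξ).1, (hweights ξ).2, (hweights 1).1, (hweights 1).2]
  refine ⟨integral_id_quaternary_half hP, ?_, integral_id_quaternary_half hQ, ?_,
    hellingerSq_quaternary_eq_binaryH hμ hP hQ⟩
  · rw [integral_sq_quaternary_half hP, integral_id_quaternary_half hP, hμsq, hξ]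
    field_simp [(sub_pos.2 hsQ).ne']
    ring
  · rw [integral_sq_quaternary_half hQ, integral_id_quaternary_half hQ, hμsq]
    field_simp
    ring
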